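/- arXiv:2506.07887 — 4 statements merged into one kernel-verified Lean document; each statement's English description precedes it below -/
import Mathlib

section
/- Let m ≥ 1, let Ω ⊆ ℂ^m be open and x₀ ∈ Ω, and let d ≥ 1. For each i ∈ {1,…,d} let νᵢ ≥ 1 and let A_{i,0},…,A_{i,νᵢ} : Ω → ℂ be holomorphic; set Ψᵢ(x,w) = Σ_{j=0}^{νᵢ} A_{i,j}(x)·wʲ. Assume that for every i one has A_{i,νᵢ}(x₀) ≠ 0 and the polynomial w ↦ Ψᵢ(x₀,w) has νᵢ pairwise distinct complex roots. Put ν = ν₁·…·ν_d. Then there exist an open neighborhood U ⊆ Ω of x₀ and holomorphic maps u₁,…,u_ν : U → ℂ^d such that for every x ∈ U the values u₁(x),…,u_ν(x) are pairwise distinct and {w ∈ ℂ^d : Ψᵢ(x,wᵢ) = 0 for all i ∈ {1,…,d}} = {u₁(x),…,u_ν(x)}. -/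
/-!
A polynomial of degree at most `n` with `n` distinct roots has exactly these roots, all simple.
So each `Ψᵢ(x₀, ·)` has `νᵢ` simple roots, and by the implicit function theorem each of them
continues holomorphically to a neighbourhood of `x₀`. The implicit function theorem is applied
to the generic polynomial on the coefficient space `Fin (n + 1) → ℂ`, which is smooth in all
variables, and the resulting root is composed with the coefficient map `x ↦ (A i j x)ⱼ`; this
needs only complex differentiability of the `A i j`. Near `x₀` the continued roots stay pairwise
distinct and the leading coefficients nonzero, so they are all the roots of `Ψᵢ(x, ·)`, and the
solutions of the system are their `ν₁ ⋯ ν_d` combinations.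
-/

open Polynomial Filter Topology

namespace Polynomial

section RootsOfInjective

variable {R : Type*} [CommRing R] [IsDomain R] {p : R[X]} {n : ℕ} {v : Fin n → R}

theorem roots_eq_map_of_injective (hp : p ≠ 0) (hdeg : p.natDegree ≤ n)
    (hv : Function.Injective v) (hroot : ∀ k, p.IsRoot (v k)) :
    p.roots = Finset.univ.val.map v := by
  have hle : Finset.univ.val.map v ≤ p.roots := by
    rw [Multiset.le_iff_subset (Finset.univ.nodup.map hv)]
    simpa [Multiset.subset_iff, mem_roots hp] using hroot
  refine (Multiset.eq_of_le_of_card_le hle ?_).symm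
  simpa using (card_roots' p).trans hdeg

theorem isRoot_iff_mem_range_of_injective (hp : p ≠ 0) (hdeg : p.natDegree ≤ n)
    (hv : Function.Injective v) (hroot : ∀ k, p.IsRoot (v k)) (w : R) :
    p.IsRoot w ↔ w ∈ Set.range v := by
  rw [← mem_roots hp, roots_eq_map_of_injective hp hdeg hv hroot]
  simp [eq_comm]

theorem not_isRoot_derivative_of_injective (hp : p ≠ 0) (hdeg : p.natDegree ≤ n)
    (hv : Function.Injective v) (hroot : ∀ k, p.IsRoot (v k)) (k : Fin n) :
    ¬(derivative p).IsRoot (v k) := by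
  classical
  have hsimple : p.rootMultiplicity (v k) = 1 := by
    rw [← count_roots, roots_eq_map_of_injective hp hdeg hv hroot,
      Multiset.count_map_eq_count' _ _ hv]
    exact Multiset.count_eq_one_of_mem Finset.univ.nodup (Finset.mem_univ k)
  intro hder
  have hmultiple := (one_lt_rootMultiplicity_iff_isRoot hp).mpr ⟨hroot k, hder⟩
  omega

end RootsOfInjective

section OfCoeffs

variable {R : Type*} [CommSemiring R] {n : ℕ}

noncomputable def ofCoeffs (c : Fin n → R) : R[X] :=
  ∑ j, C (c j) * X ^ (j : ℕ)

@[simp]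
theorem eval_ofCoeffs (c : Fin n → R) (w : R) :
    (ofCoeffs c).eval w = ∑ j, c j * w ^ (j : ℕ) := by
  simp [ofCoeffs, eval_finsetSum]

theorem natDegree_ofCoeffs_le (c : Fin (n + 1) → R) : (ofCoeffs c).natDegree ≤ n :=
  natDegree_sum_le_of_forall_le _ _ fun j _ =>
    (natDegree_C_mul_X_pow_le _ _).trans (Fin.is_le j)

theorem coeff_ofCoeffs_self (c : Fin (n + 1) → R) : (ofCoeffs c).coeff n = c (Fin.last n) := by
  simp [ofCoeffs, finsetSum_coeff, coeff_C_mul, coeff_X_pow, Fin.sum_univ_castSucc,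
    (Fin.is_lt _).ne']

theorem ofCoeffs_ne_zero {c : Fin (n + 1) → R} (h : c (Fin.last n) ≠ 0) : ofCoeffs c ≠ 0 :=
  fun h0 => h (by rw [← coeff_ofCoeffs_self c, h0, coeff_zero])

end OfCoeffs

end Polynomial

section ImplicitRoot

variable {𝕜 : Type*} [RCLike 𝕜] {E : Type*} [NormedAddCommGroup E] [NormedSpace 𝕜 E]

theorem ContDiffAt.exists_eventually_differentiableAt_implicit_zero [CompleteSpace E]
    {f : E × 𝕜 → 𝕜} {u : E × 𝕜} {a : 𝕜} (hf : ContDiffAt 𝕜 1 f u) (hfu : f u = 0)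
    (hder : HasDerivAt (fun w => f (u.1, w)) a u.2) (ha : a ≠ 0) :
    ∃ ψ : E → 𝕜, ψ u.1 = u.2 ∧ ∀ᶠ x in 𝓝 u.1, DifferentiableAt 𝕜 ψ x ∧ f (x, ψ x) = 0 := by
  have hpartial : fderiv 𝕜 f u ∘L .inr 𝕜 E 𝕜 = (1 : 𝕜 →L[𝕜] 𝕜).smulRight a := by
    have hfu' : HasFDerivAt f (fderiv 𝕜 f u) (u.1, u.2) :=
      (hf.differentiableAt one_ne_zero).hasFDerivAt
    exact (hfu'.comp u.2 (hasFDerivAt_prodMk_right u.1 u.2)).unique hder.hasFDerivAt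
  have hinv : (fderiv 𝕜 f u ∘L .inr 𝕜 E 𝕜).IsInvertible := by
    rw [hpartial]
    exact ⟨ContinuousLinearEquiv.unitsEquivAut 𝕜 (Units.mk0 a ha), by ext; simp⟩
  refine ⟨hf.implicitFunction one_ne_zero hinv, hf.implicitFunction_apply_self _ _, ?_⟩
  filter_upwards [(hf.contDiffAt_implicitFunction one_ne_zero hinv).eventually (by simp),
    hf.eventually_apply_implicitFunction one_ne_zero hinv] with x hψ hroot
  exact ⟨hψ.differentiableAt one_ne_zero, hroot.trans hfu⟩

theorem exists_eventually_differentiableAt_isRoot_ofCoeffs {n : ℕ} {c₀ : Fin n → 𝕜} {w₀ : 𝕜}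
    (hroot : (ofCoeffs c₀).IsRoot w₀) (hsimple : ¬(derivative (ofCoeffs c₀)).IsRoot w₀) :
    ∃ ρ : (Fin n → 𝕜) → 𝕜, ρ c₀ = w₀ ∧
      ∀ᶠ c in 𝓝 c₀, DifferentiableAt 𝕜 ρ c ∧ (ofCoeffs c).IsRoot (ρ c) :=
  ContDiffAt.exists_eventually_differentiableAt_implicit_zero
    (f := fun p => (ofCoeffs p.1).eval p.2) (u := (c₀, w₀))
    (by simp only [eval_ofCoeffs]; fun_prop) hroot ((ofCoeffs c₀).hasDerivAt w₀) hsimple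

theorem exists_eventually_differentiableAt_roots_ofCoeffs {n : ℕ} {a : E → Fin (n + 1) → 𝕜}
    {x₀ : E} (ha : ∀ᶠ x in 𝓝 x₀, DifferentiableAt 𝕜 a x) (hlead : a x₀ (Fin.last n) ≠ 0)
    {r : Fin n → 𝕜} (hr : Function.Injective r) (hroot : ∀ k, (ofCoeffs (a x₀)).IsRoot (r k)) :
    ∃ g : Fin n → E → 𝕜, ∀ᶠ x in 𝓝 x₀, (∀ k, DifferentiableAt 𝕜 (g k) x) ∧
      Function.Injective (g · x) ∧ ∀ w, (ofCoeffs (a x)).IsRoot w ↔ w ∈ Set.range (g · x) := by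
  have hsimple := not_isRoot_derivative_of_injective (ofCoeffs_ne_zero hlead)
    (natDegree_ofCoeffs_le _) hr hroot
  choose ρ hρ₀ hρ using fun k => exists_eventually_differentiableAt_isRoot_ofCoeffs (hroot k)
    (hsimple k)
  have ha₀ : ContinuousAt a x₀ := ha.self_of_nhds.continuousAt
  have hg : ∀ k, ∀ᶠ x in 𝓝 x₀,
      DifferentiableAt 𝕜 (ρ k ∘ a) x ∧ (ofCoeffs (a x)).IsRoot (ρ k (a x)) := fun k => by
    filter_upwards [ha, ha₀.eventually (hρ k)] with x hax hρx
    exact ⟨hρx.1.comp x hax, hρx.2⟩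
  have hg₀ : ∀ k, ContinuousAt (ρ k ∘ a) x₀ := fun k => (hg k).self_of_nhds.1.continuousAt
  have hinj : ∀ k k', k ≠ k' → ∀ᶠ x in 𝓝 x₀, ρ k (a x) ≠ ρ k' (a x) := fun k k' hkk' =>
    ((hg₀ k).ne_iff_eventually_ne (hg₀ k')).1 (by simpa [hρ₀] using hr.ne hkk')
  have hlead' : ∀ᶠ x in 𝓝 x₀, a x (Fin.last n) ≠ 0 :=
    ((continuous_apply _).continuousAt.comp ha₀).eventually_ne hlead
  refine ⟨fun k => ρ k ∘ a, ?_⟩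
  filter_upwards [eventually_all.2 hg, hlead',
    eventually_all.2 fun k => eventually_all.2 fun k' => eventually_imp_distrib_left.2 (hinj k k')]
    with x hgx hleadx hnex
  have hinjx : Function.Injective (ρ · (a x)) := fun k k' h => not_imp_not.1 (hnex k k') h
  exact ⟨fun k => (hgx k).1, hinjx, isRoot_iff_mem_range_of_injective (ofCoeffs_ne_zero hleadx)
    (natDegree_ofCoeffs_le _) hinjx fun k => (hgx k).2⟩

end ImplicitRoot

theorem regular_point_nu_regular_elements_general
    (m d : ℕ)
    (Ω : Set (Fin m → ℂ)) (hΩ : IsOpen Ω) (x₀ : Fin m → ℂ) (hx₀ : x₀ ∈ Ω)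
    (ν : Fin d → ℕ)
    (A : Fin d → ℕ → (Fin m → ℂ) → ℂ)
    (hA : ∀ i : Fin d, ∀ j ≤ ν i, DifferentiableOn ℂ (A i j) Ω)
    (hlead : ∀ i : Fin d, A i (ν i) x₀ ≠ 0)
    (hdistinct : ∀ i : Fin d, ∃ r : Fin (ν i) → ℂ, Function.Injective r ∧
      ∀ w : ℂ, (∑ j ∈ Finset.range (ν i + 1), A i j x₀ * w ^ j = 0 ↔ ∃ k, w = r k)) :
    ∃ U : Set (Fin m → ℂ), IsOpen U ∧ U ⊆ Ω ∧ x₀ ∈ U ∧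
      ∃ u : Fin (∏ i, ν i) → (Fin m → ℂ) → (Fin d → ℂ),
        (∀ k, DifferentiableOn ℂ (u k) U) ∧
        ∀ x ∈ U, Function.Injective (fun k => u k x) ∧
          {w : Fin d → ℂ |
              ∀ i : Fin d, ∑ j ∈ Finset.range (ν i + 1), A i j x * w i ^ j = 0}
            = Set.range (fun k => u k x) := by
  choose r hr_inj hr_roots using hdistinct
  let a : ∀ i, (Fin m → ℂ) → Fin (ν i + 1) → ℂ := fun i x j => A i j x
  have hpoly : ∀ i x w, ∑ j ∈ Finset.range (ν i + 1), A i j x * w ^ j = 0 ↔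
      (ofCoeffs (a i x)).IsRoot w := fun i x w => by
    simp [a, Fin.sum_univ_eq_sum_range (fun j => A i j x * w ^ j)]
  have ha : ∀ i, ∀ᶠ x in 𝓝 x₀, DifferentiableAt ℂ (a i) x := fun i =>
    eventually_of_mem (hΩ.mem_nhds hx₀) fun x hx => differentiableAt_pi.2 fun j =>
      (hA i j (Fin.is_le j)).differentiableAt (hΩ.mem_nhds hx)
  choose g hg using fun i => exists_eventually_differentiableAt_roots_ofCoeffs (ha i) (hlead i)
    (hr_inj i) fun k => (hpoly i x₀ (r i k)).1 ((hr_roots i _).2 ⟨k, rfl⟩)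
  obtain ⟨U, hU, hU_open, hx₀U⟩ := mem_nhds_iff.1 ((eventually_all.2 hg).and (hΩ.mem_nhds hx₀))
  refine ⟨U, hU_open, fun x hx => (hU hx).2, hx₀U,
    fun k x i => g i (finPiFinEquiv.symm k i) x, ?_, ?_⟩
  · intro k x hx
    exact (differentiableAt_pi.2 fun i => ((hU hx).1 i).1 _).differentiableWithinAt
  intro x hx
  obtain ⟨hgx, -⟩ := hU hx
  have hpi : Function.Injective (Pi.map fun i k => g i k x) := .piMap fun i => (hgx i).2.1
  refine ⟨hpi.comp finPiFinEquiv.symm.injective, ?_⟩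
  change _ = Set.range (Pi.map (fun i k => g i k x) ∘ finPiFinEquiv.symm)
  rw [finPiFinEquiv.symm.surjective.range_comp, Set.range_piMap]
  ext w
  simp only [Set.mem_ofPred_eq, Set.mem_univ_pi, hpoly, (hgx _).2.2]

/-- **Corollary 2.8 (analytic content)**: at a regular point `x₀` (nonvanishing leading
coefficients and `νᵢ` pairwise distinct roots of each defining polynomial), there exist,
on a neighborhood `U` of `x₀`, exactly `ν = ν₁⋯ν_d` holomorphic maps `u₁, …, u_ν : U → ℂ^d`
with pairwise distinct values whose values are exactly the simultaneous solutions of the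
system `Ψᵢ(x, wᵢ) = 0`, `i = 1, …, d`. -/
theorem regular_point_nu_regular_elements
    (m d : ℕ) (hm : 1 ≤ m) (hd : 1 ≤ d)
    (Ω : Set (Fin m → ℂ)) (hΩ : IsOpen Ω) (x₀ : Fin m → ℂ) (hx₀ : x₀ ∈ Ω)
    (ν : Fin d → ℕ) (hν : ∀ i, 1 ≤ ν i)
    (A : Fin d → ℕ → (Fin m → ℂ) → ℂ)
    (hA : ∀ i : Fin d, ∀ j ≤ ν i, DifferentiableOn ℂ (A i j) Ω)
    (hlead : ∀ i : Fin d, A i (ν i) x₀ ≠ 0)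
    (hdistinct : ∀ i : Fin d, ∃ r : Fin (ν i) → ℂ, Function.Injective r ∧
      ∀ w : ℂ, (∑ j ∈ Finset.range (ν i + 1), A i j x₀ * w ^ j = 0 ↔ ∃ k, w = r k)) :
    ∃ U : Set (Fin m → ℂ), IsOpen U ∧ U ⊆ Ω ∧ x₀ ∈ U ∧
      ∃ u : Fin (∏ i, ν i) → (Fin m → ℂ) → (Fin d → ℂ),
        (∀ k, DifferentiableOn ℂ (u k) U) ∧
        ∀ x ∈ U, Function.Injective (fun k => u k x) ∧
          {w : Fin d → ℂ |
              ∀ i : Fin d, ∑ j ∈ Finset.range (ν i + 1), A i j x * w i ^ j = 0}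
            = Set.range (fun k => u k x) :=
  regular_point_nu_regular_elements_general m d Ω hΩ x₀ hx₀ ν A hA hlead hdistinct
end

section
/- Let U ⊆ ℂ be open and connected, let ν ≥ 1, let w₁,…,w_ν be meromorphic functions on U, and let A₀,…,A_ν be holomorphic functions on U with A_ν not identically zero. Assume: (i) for every x ∈ U there exists j with A_j(x) ≠ 0 (the coefficients have no common zero), and (ii) for every x ∈ U at which none of the wᵢ has a pole and every w ∈ ℂ, Σ_{j=0}^{ν} A_j(x)·wʲ = A_ν(x)·∏_{i=1}^{ν}(w − wᵢ(x)). Then for every x₀ ∈ U, the sum over i = 1,…,ν of the pole order of wᵢ at x₀ equals the vanishing order of A_ν at x₀. -/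
/-!
Multiplying the factor `z - wᵢ(x)` by `(x - x₀) ^ pᵢ`, where `pᵢ` is the pole order of `wᵢ`
at `x₀`, gives a linear polynomial `uᵢ(x) z - vᵢ(x)` whose coefficients are analytic at `x₀`
and do not both vanish there. Hence
`(x - x₀) ^ (∑ pᵢ) · ∑ⱼ Aⱼ(x) zʲ = A_ν(x) · ∏ᵢ (uᵢ(x) z - vᵢ(x))`
near `x₀`, with both polynomials in `z` having analytic coefficients and being nonzero at
`x = x₀` (the left one because the `Aⱼ` have no common zero). Comparing vanishing orders at `x₀`
along a coefficient that is nonzero at `x₀`, first on one side and then on the other, gives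
`∑ pᵢ = ord_{x₀} A_ν`.
-/

open Filter Topology Polynomial

section PoleOrder

variable {𝕜 : Type*} [NontriviallyNormedField 𝕜]

/-- Also `0` where `f` vanishes identically near `x` (meromorphic order `⊤`). -/
noncomputable def poleOrder (f : 𝕜 → 𝕜) (x : 𝕜) : ℕ :=
  (-(WithTop.untopD 0 (meromorphicOrderAt f x))).toNat

theorem MeromorphicAt.exists_analyticAt_eq_sub_pow_poleOrder_mul {f : 𝕜 → 𝕜} {x : 𝕜}
    (hf : MeromorphicAt f x) :
    ∃ g : 𝕜 → 𝕜, AnalyticAt 𝕜 g x ∧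
      (∀ᶠ z in 𝓝[≠] x, (z - x) ^ poleOrder f x * f z = g z) ∧
      (poleOrder f x = 0 ∨ g x ≠ 0) := by
  cases h : meromorphicOrderAt f x using WithTop.recTopCoe with
  | top =>
    have hp : poleOrder f x = 0 := by simp [poleOrder, h]
    refine ⟨0, analyticAt_const, ?_, Or.inl hp⟩
    filter_upwards [meromorphicOrderAt_eq_top_iff.mp h] with z hz
    simp [hz]
  | coe n =>
    obtain ⟨g, hg, hgx, hfg⟩ := (meromorphicOrderAt_eq_int_iff hf).mp h
    have hp : (poleOrder f x : ℤ) = max (-n) 0 := by simp [poleOrder, h]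
    set m := poleOrder f x
    refine ⟨fun z => (z - x) ^ (m + n).toNat * g z, by fun_prop, ?_, ?_⟩
    · filter_upwards [hfg, self_mem_nhdsWithin] with z hz hzx
      have hzx : z - x ≠ 0 := sub_ne_zero.mpr hzx
      rw [hz, smul_eq_mul, ← mul_assoc, ← zpow_natCast, ← zpow_add₀ hzx, ← zpow_natCast,
        Int.toNat_of_nonneg (by omega)]
    · refine or_iff_not_imp_left.mpr fun hm => ?_
      simpa [show (m + n).toNat = 0 by omega] using hgx

end PoleOrder

section AnalyticCoeffs

variable (𝕜 : Type*) [NontriviallyNormedField 𝕜] {E : Type*} [NormedAddCommGroup E]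
  [NormedSpace 𝕜 E]

def AnalyticAtCoeffs (P : E → 𝕜[X]) (x : E) : Prop :=
  ∀ n, AnalyticAt 𝕜 (fun z => (P z).coeff n) x

variable {𝕜} {P Q : E → 𝕜[X]} {x : E}

theorem analyticAtCoeffs_const (p : 𝕜[X]) : AnalyticAtCoeffs 𝕜 (fun _ : E => p) x :=
  fun _ => analyticAt_const

theorem AnalyticAt.analyticAtCoeffs_C {f : E → 𝕜} (hf : AnalyticAt 𝕜 f x) :
    AnalyticAtCoeffs 𝕜 (fun z => C (f z)) x := by
  intro n
  rcases eq_or_ne n 0 with rfl | hn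
  · simpa using hf
  · simpa [coeff_C, hn] using analyticAt_const

theorem AnalyticAtCoeffs.sub (hP : AnalyticAtCoeffs 𝕜 P x) (hQ : AnalyticAtCoeffs 𝕜 Q x) :
    AnalyticAtCoeffs 𝕜 (fun z => P z - Q z) x := by
  intro n
  simp only [coeff_sub]
  exact (hP n).sub (hQ n)

theorem AnalyticAtCoeffs.mul (hP : AnalyticAtCoeffs 𝕜 P x) (hQ : AnalyticAtCoeffs 𝕜 Q x) :
    AnalyticAtCoeffs 𝕜 (fun z => P z * Q z) x := by
  intro n
  simp only [coeff_mul]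
  exact Finset.analyticAt_fun_sum _ fun k _ => (hP k.1).mul (hQ k.2)

theorem analyticAtCoeffs_sum {ι : Type*} (s : Finset ι) {P : ι → E → 𝕜[X]}
    (h : ∀ i ∈ s, AnalyticAtCoeffs 𝕜 (P i) x) :
    AnalyticAtCoeffs 𝕜 (fun z => ∑ i ∈ s, P i z) x := by
  intro n
  simp only [finsetSum_coeff]
  exact Finset.analyticAt_fun_sum _ fun i hi => h i hi n

theorem analyticAtCoeffs_prod {ι : Type*} (s : Finset ι) {P : ι → E → 𝕜[X]}
    (h : ∀ i ∈ s, AnalyticAtCoeffs 𝕜 (P i) x) :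
    AnalyticAtCoeffs 𝕜 (fun z => ∏ i ∈ s, P i z) x := by
  simp only [← Finset.prod_apply]
  exact Finset.prod_induction _ (fun Q => AnalyticAtCoeffs 𝕜 Q x)
    (fun _ _ hP hQ => hP.mul hQ) (analyticAtCoeffs_const 1) h

end AnalyticCoeffs

section Order

variable {𝕜 : Type*} [NontriviallyNormedField 𝕜] {a b f g : 𝕜 → 𝕜} {x : 𝕜}

theorem analyticOrderAt_le_of_mul_eventuallyEq (ha : AnalyticAt 𝕜 a x) (hb : AnalyticAt 𝕜 b x)
    (hf : AnalyticAt 𝕜 f x) (hg : AnalyticAt 𝕜 g x) (h : a * f =ᶠ[𝓝 x] b * g) (hfx : f x ≠ 0) :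
    analyticOrderAt b x ≤ analyticOrderAt a x :=
  calc analyticOrderAt b x
      ≤ analyticOrderAt b x + analyticOrderAt g x := le_self_add
    _ = analyticOrderAt a x := by
      rw [← analyticOrderAt_mul hb hg, ← analyticOrderAt_congr h, analyticOrderAt_mul ha hf,
        analyticOrderAt_eq_zero.mpr (Or.inr hfx), add_zero]

theorem analyticOrderAt_eq_of_C_mul_eq_C_mul {P Q : 𝕜 → 𝕜[X]} (ha : AnalyticAt 𝕜 a x)
    (hb : AnalyticAt 𝕜 b x) (hP : AnalyticAtCoeffs 𝕜 P x) (hQ : AnalyticAtCoeffs 𝕜 Q x)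
    (hPx : P x ≠ 0) (hQx : Q x ≠ 0) (h : ∀ᶠ z in 𝓝[≠] x, C (a z) * P z = C (b z) * Q z) :
    analyticOrderAt a x = analyticOrderAt b x := by
  have := NormedField.nhdsNE_neBot x
  have hcoeff : ∀ n, a * (fun z => (P z).coeff n) =ᶠ[𝓝 x] b * (fun z => (Q z).coeff n) := by
    intro n
    refine ((ha.mul (hP n)).continuousAt.eventuallyEq_nhds_iff_eventuallyEq_nhdsNE
      (hb.mul (hQ n)).continuousAt).mp ?_
    filter_upwards [h] with z hz
    simpa only [Pi.mul_apply, coeff_C_mul] using congrArg (coeff · n) hz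
  obtain ⟨j, hj⟩ := Polynomial.ext_iff.not.mp hPx |> not_forall.mp
  obtain ⟨k, hk⟩ := Polynomial.ext_iff.not.mp hQx |> not_forall.mp
  exact le_antisymm
    (analyticOrderAt_le_of_mul_eventuallyEq hb ha (hQ k) (hP k) (hcoeff k).symm hk)
    (analyticOrderAt_le_of_mul_eventuallyEq ha hb (hP j) (hQ j) (hcoeff j) hj)

end Order

section PolynomialIdentities

variable {K : Type*} [Field K]

theorem C_mul_X_sub_C_ne_zero {a b : K} (h : a ≠ 0 ∨ b ≠ 0) : C a * X - C b ≠ 0 := by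
  intro h0
  have ha : a = 0 := by simpa using congrArg (coeff · 1) h0
  have hb : b = 0 := by simpa using congrArg (coeff · 0) h0
  tauto

theorem sum_range_C_mul_X_pow_ne_zero {n : ℕ} {a : ℕ → K} (h : ∃ j ≤ n, a j ≠ 0) :
    ∑ j ∈ Finset.range (n + 1), C (a j) * X ^ j ≠ 0 := by
  obtain ⟨j, hj, haj⟩ := h
  refine ne_of_apply_ne (coeff · j) ?_
  simpa [finsetSum_coeff, coeff_C_mul_X_pow, Nat.lt_succ_iff.mpr hj] using haj

theorem C_prod_mul_prod_X_sub_C {ι : Type*} (s : Finset ι) {u v w : ι → K}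
    (h : ∀ i ∈ s, u i * w i = v i) :
    C (∏ i ∈ s, u i) * ∏ i ∈ s, (X - C (w i)) = ∏ i ∈ s, (C (u i) * X - C (v i)) := by
  rw [map_prod, ← Finset.prod_mul_distrib]
  refine Finset.prod_congr rfl fun i hi => ?_
  rw [mul_sub, ← C_mul, h i hi]

end PolynomialIdentities

theorem pole_divisor_eq_zero_divisor_of_leading_coefficient_general
    (U : Set ℂ) (hUo : IsOpen U)
    (ν : ℕ)
    (w : Fin ν → ℂ → ℂ) (hw : ∀ i, MeromorphicOn (w i) U)
    (A : ℕ → ℂ → ℂ) (hA : ∀ j ≤ ν, AnalyticOnNhd ℂ (A j) U)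
    (hnocommon : ∀ x ∈ U, ∃ j ≤ ν, A j x ≠ 0)
    (hfact : ∀ x ∈ U, (∀ i, AnalyticAt ℂ (w i) x) → ∀ z : ℂ,
      ∑ j ∈ Finset.range (ν + 1), A j x * z ^ j = A ν x * ∏ i, (z - w i x))
    (x₀ : ℂ) (hx₀ : x₀ ∈ U) :
    ∑ i : Fin ν, (-(WithTop.untopD 0 (meromorphicOrderAt (w i) x₀))).toNat
      = (analyticOrderAt (A ν) x₀).toNat := by
  set p : Fin ν → ℕ := fun i => poleOrder (w i) x₀
  choose v hv hwv hv₀ using fun i => (hw i x₀ hx₀).exists_analyticAt_eq_sub_pow_poleOrder_mul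
  set P : ℂ → ℂ[X] := fun z => ∑ j ∈ Finset.range (ν + 1), C (A j z) * X ^ j
  set Q : ℂ → ℂ[X] := fun z => ∏ i, (C ((z - x₀) ^ p i) * X - C (v i z))
  have hP : AnalyticAtCoeffs ℂ P x₀ := analyticAtCoeffs_sum _ fun j hj =>
    (hA j (Nat.lt_succ_iff.mp (Finset.mem_range.mp hj)) x₀ hx₀).analyticAtCoeffs_C.mul
      (analyticAtCoeffs_const _)
  have hQ : AnalyticAtCoeffs ℂ Q x₀ := analyticAtCoeffs_prod _ fun i _ =>
    ((analyticAt_id.sub analyticAt_const).pow _).analyticAtCoeffs_C.mul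
      (analyticAtCoeffs_const X) |>.sub (hv i).analyticAtCoeffs_C
  have hPx₀ : P x₀ ≠ 0 := sum_range_C_mul_X_pow_ne_zero (hnocommon x₀ hx₀)
  have hQx₀ : Q x₀ ≠ 0 := Finset.prod_ne_zero_iff.mpr fun i _ =>
    C_mul_X_sub_C_ne_zero ((hv₀ i).imp (fun h => by simp [p, h]) id)
  have hident : ∀ᶠ z in 𝓝[≠] x₀, C ((z - x₀) ^ ∑ i, p i) * P z = C (A ν z) * Q z := by
    filter_upwards [nhdsWithin_le_nhds (hUo.mem_nhds hx₀),
      eventually_all.mpr fun i => (hw i x₀ hx₀).eventually_analyticAt,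
      eventually_all.mpr hwv] with z hzU hwz hvz
    have hPz : P z = C (A ν z) * ∏ i, (X - C (w i z)) := Polynomial.funext fun u => by
      simpa [P, eval_finsetSum, eval_prod] using hfact z hzU hwz u
    rw [hPz, mul_left_comm, ← Finset.prod_pow_eq_pow_sum,
      C_prod_mul_prod_X_sub_C _ fun i _ => hvz i]
  have hord := analyticOrderAt_eq_of_C_mul_eq_C_mul (by fun_prop) (hA ν le_rfl x₀ hx₀)
    hP hQ hPx₀ hQx₀ hident
  have hmono : analyticOrderAt (fun z => (z - x₀) ^ ∑ i, p i) x₀ = ∑ i, p i :=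
    analyticOrderAt_centeredMonomial
  rw [← hord, hmono, ENat.toNat_natCast]
  rfl

/-- **Lemma 4.1 (one-variable case)**: if the meromorphic functions `w₁, …, w_ν` on a
connected open set `U ⊆ ℂ` are the branches of the algebroid function defined by
`Σ_j A_j(x) wʲ = A_ν(x) ∏ᵢ (w − wᵢ(x))`, where the holomorphic coefficients
`A₀, …, A_ν` have no common zero and `A_ν` is not identically zero, then at every
`x₀ ∈ U` the sum of the pole orders of the `wᵢ` equals the vanishing order of `A_ν`.

Here the pole order of `wᵢ` at `x₀` is `max (0, −order)` where `order ∈ ℤ ∪ {⊤}` is the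
meromorphic order (encoded below via `Int.toNat` and `WithTop.untop'`), and the vanishing
order of the holomorphic function `A_ν` is its analytic order of vanishing. -/
theorem pole_divisor_eq_zero_divisor_of_leading_coefficient
    (U : Set ℂ) (hUo : IsOpen U) (hUc : IsConnected U)
    (ν : ℕ) (hν : 1 ≤ ν)
    (w : Fin ν → ℂ → ℂ) (hw : ∀ i, MeromorphicOn (w i) U)
    (A : ℕ → ℂ → ℂ) (hA : ∀ j ≤ ν, AnalyticOnNhd ℂ (A j) U)
    (hAν : ∃ x ∈ U, A ν x ≠ 0)
    (hnocommon : ∀ x ∈ U, ∃ j ≤ ν, A j x ≠ 0)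
    (hfact : ∀ x ∈ U, (∀ i, AnalyticAt ℂ (w i) x) → ∀ z : ℂ,
      ∑ j ∈ Finset.range (ν + 1), A j x * z ^ j = A ν x * ∏ i, (z - w i x))
    (x₀ : ℂ) (hx₀ : x₀ ∈ U) :
    ∑ i : Fin ν, (-(WithTop.untopD 0 (meromorphicOrderAt (w i) x₀))).toNat
      = (analyticOrderAt (A ν) x₀).toNat :=
  pole_divisor_eq_zero_divisor_of_leading_coefficient_general U hUo ν w hw A hA hnocommon hfact x₀
    hx₀
end

section
/- Let r₀ ≥ 0 and let u : (r₀, ∞) → ℝ be a nonnegative, nondecreasing function. Then for every δ > 0 the set E_δ = { r ∈ (r₀, ∞) : u is differentiable at r and u′(r) > u(r)^{1+δ} } has finite Lebesgue measure. -/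
open MeasureTheory Set Filter Topology

/-- **Borel's growth lemma** (Section 5.2): if `u` is nonnegative and nondecreasing on
`(r₀, ∞)`, then for every `δ > 0` the set of `r > r₀` at which `u` is differentiable with
`u′(r) > u(r)^{1+δ}` has finite Lebesgue measure. -/
theorem borel_growth_lemma
    (r₀ : ℝ) (hr₀ : 0 ≤ r₀) (u : ℝ → ℝ)
    (hnonneg : ∀ r ∈ Set.Ioi r₀, 0 ≤ u r)
    (hmono : MonotoneOn u (Set.Ioi r₀))
    (δ : ℝ) (hδ : 0 < δ) :
    MeasureTheory.volume
      {r | r ∈ Set.Ioi r₀ ∧ DifferentiableAt ℝ u r ∧ u r ^ (1 + δ) < deriv u r} < ⊤ := by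
  set E := {r | r ∈ Set.Ioi r₀ ∧ DifferentiableAt ℝ u r ∧ u r ^ (1 + δ) < deriv u r} with hE
  rcases E.eq_empty_or_nonempty with h | ⟨c, hcmem, hcdiff, hcineq⟩
  · rw [h]; simp
  -- `u c > 0`
  have hucpos : 0 < u c := by
    rcases (hnonneg c hcmem).lt_or_eq with h | h
    · exact h
    exfalso
    -- u vanishes on `(r₀, c]`, so the derivative at `c`, computed from the left, is `0`.
    have hzero : ∀ x ∈ Set.Ioc r₀ c, u x = 0 := fun x hx =>
      le_antisymm (h ▸ hmono hx.1 hcmem hx.2) (hnonneg x hx.1)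
    have hslope : Tendsto (slope u c) (𝓝[<] c) (𝓝 (deriv u c)) :=
      (hasDerivAt_iff_tendsto_slope.1 hcdiff.hasDerivAt).mono_left
        (nhdsWithin_mono c fun x hx => ne_of_lt hx)
    have hslope0 : Tendsto (slope u c) (𝓝[<] c) (𝓝 (0 : ℝ)) := by
      refine Tendsto.congr' ?_ tendsto_const_nhds
      filter_upwards [Ioo_mem_nhdsLT_of_mem (show c ∈ Set.Ioc r₀ c from ⟨hcmem, le_rfl⟩)]
        with x hx
      simp [slope, hzero x ⟨hx.1, hx.2.le⟩, ← h]
    have hd0 : deriv u c = 0 := tendsto_nhds_unique hslope hslope0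
    rw [hd0, ← h, Real.zero_rpow (by positivity)] at hcineq
    exact lt_irrefl _ hcineq
  -- the modified function `w`
  set v : ℝ → ℝ := fun r => u (max r c) with hv
  have hmemv : ∀ r : ℝ, max r c ∈ Set.Ioi r₀ := fun r =>
    lt_of_lt_of_le hcmem (le_max_right r c)
  have hvmono : Monotone v := fun a b hab =>
    hmono (hmemv a) (hmemv b) (max_le_max hab le_rfl)
  have hvge : ∀ r, u c ≤ v r := fun r => hmono hcmem (hmemv r) (le_max_right r c)
  have hvpos : ∀ r, 0 < v r := fun r => lt_of_lt_of_le hucpos (hvge r)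
  set w : ℝ → ℝ := fun r => -(v r ^ (-δ)) with hw
  have hwmono : Monotone w := fun a b hab =>
    neg_le_neg (Real.rpow_le_rpow_of_nonpos (hvpos a) (hvmono hab) (neg_nonpos.2 hδ.le))
  have hwub : ∀ r, w r ≤ 0 := fun r => neg_nonpos.2 (Real.rpow_nonneg (hvpos r).le _)
  have hwlb : ∀ r, -(u c ^ (-δ)) ≤ w r := fun r =>
    neg_le_neg (Real.rpow_le_rpow_of_nonpos hucpos (hvge r) (neg_nonpos.2 hδ.le))
  set g := hwmono.stieltjesFunction with hg
  have hgub : ∀ x, g x ≤ 0 := fun x => by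
    rw [hwmono.stieltjesFunction_eq]
    exact (hwmono.rightLim_le (lt_add_one x)).trans (hwub (x + 1))
  have hglb : ∀ x, -(u c ^ (-δ)) ≤ g x := fun x => by
    rw [hwmono.stieltjesFunction_eq]
    exact (hwlb x).trans (hwmono.le_rightLim le_rfl)
  set μ := g.measure with hμ
  have hμfin : IsFiniteMeasure μ := by
    constructor
    rw [g.measure_univ (l := ⨅ x, g x) (u := ⨆ x, g x)
      (tendsto_atBot_ciInf g.mono ⟨-(u c ^ (-δ)), fun y ⟨x, hx⟩ => hx ▸ hglb x⟩)
      (tendsto_atTop_ciSup g.mono ⟨0, fun y ⟨x, hx⟩ => hx ▸ hgub x⟩)]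
    exact ENNReal.ofReal_lt_top
  -- the set where the Radon–Nikodym derivative is large
  set T : Set ℝ := {x | ENNReal.ofReal δ ≤ μ.rnDeriv volume x} with hT
  have hTsub : volume (E ∩ Set.Ioi c) ≤ volume T := by
    refine measure_mono_ae ?_
    filter_upwards [hwmono.ae_hasDerivAt] with x hx hmemx
    obtain ⟨⟨hxr₀, hxdiff, hxineq⟩, hxc⟩ := hmemx
    have hxpos : 0 < u x := lt_of_lt_of_le hucpos (hmono hcmem hxr₀ (le_of_lt hxc))
    have h1 : HasDerivAt (fun y : ℝ => u y ^ (-δ))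
        ((-δ) * u x ^ (-δ - 1) * deriv u x) x :=
      (Real.hasDerivAt_rpow_const (Or.inl (ne_of_gt hxpos))).comp x hxdiff.hasDerivAt
    have h2 : HasDerivAt w (-((-δ) * u x ^ (-δ - 1) * deriv u x)) x := by
      refine h1.neg.congr_of_eventuallyEq ?_
      filter_upwards [isOpen_Ioi.mem_nhds hxc] with y hy
      simp [hw, hv, max_eq_left (le_of_lt (Set.mem_Ioi.1 hy))]
    have hud : -((-δ) * u x ^ (-δ - 1) * deriv u x)
        = (μ.rnDeriv volume x).toReal := h2.unique hx
    have hgt : δ < (μ.rnDeriv volume x).toReal := by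
      rw [← hud]
      have key : u x ^ (-δ - 1) * u x ^ (1 + δ) = 1 := by
        rw [← Real.rpow_add hxpos, show -δ - 1 + (1 + δ) = 0 by ring, Real.rpow_zero]
      calc δ = δ * (u x ^ (-δ - 1) * u x ^ (1 + δ)) := by rw [key]; ring
        _ = δ * u x ^ (-δ - 1) * (u x ^ (1 + δ)) := by ring
        _ < δ * u x ^ (-δ - 1) * deriv u x := by
            refine mul_lt_mul_of_pos_left hxineq ?_
            exact mul_pos hδ (Real.rpow_pos_of_pos hxpos _)
        _ = -((-δ) * u x ^ (-δ - 1) * deriv u x) := by ring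
    exact ENNReal.ofReal_le_of_le_toReal hgt.le
  have hTfin : volume T < ⊤ := by
    have hmarkov : ENNReal.ofReal δ * volume T ≤ ∫⁻ x, μ.rnDeriv volume x :=
      mul_meas_ge_le_lintegral (μ.measurable_rnDeriv volume) _
    have hint : ∫⁻ x, μ.rnDeriv volume x < ⊤ := μ.lintegral_rnDeriv_lt_top volume
    by_contra h
    rw [not_lt, top_le_iff] at h
    rw [h, ENNReal.mul_top (by simp [hδ])] at hmarkov
    exact (lt_irrefl _ (lt_of_le_of_lt (top_le_iff.1 hmarkov ▸ le_rfl) hint))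
  -- assemble
  have hsub : E ⊆ Set.Ioc r₀ c ∪ (E ∩ Set.Ioi c) := by
    intro x hx
    rcases le_or_gt x c with h | h
    · exact Or.inl ⟨hx.1, h⟩
    · exact Or.inr ⟨hx, h⟩
  calc volume E ≤ volume (Set.Ioc r₀ c ∪ (E ∩ Set.Ioi c)) := measure_mono hsub
    _ ≤ volume (Set.Ioc r₀ c) + volume (E ∩ Set.Ioi c) := measure_union_le _ _
    _ < ⊤ := ENNReal.add_lt_top.2
        ⟨by simp [Real.volume_Ioc], lt_of_le_of_lt hTsub hTfin⟩
end

section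
/- Let κ : ℝ → ℝ be continuous on [0, ∞), with κ(t) ≤ 0 for all t ≥ 0 and κ nonincreasing on [0, ∞) (i.e., κ(s) ≥ κ(t) whenever 0 ≤ s ≤ t). Let G : ℝ → ℝ be twice differentiable on [0, ∞) with G″(t) + κ(t)·G(t) = 0 for all t ≥ 0, G(0) = 0 and G′(0) = 1. Then for every t ≥ 0 one has t ≤ G(t), and moreover G(t) ≤ t if κ(t) = 0, while G(t) ≤ sinh(√(−κ(t))·t) / √(−κ(t)) if κ(t) < 0. -/
/-!
While `G ≥ 0`, the equation gives `G'' = -κ G ≥ 0`, hence `G' ≥ 1` and `G(t) ≥ t`; a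
continuity argument on the closed set `{t | t ≤ G t ∧ 1 ≤ G' t}` propagates this from `0`
to all of `[0, ∞)`.

For the upper bound at `T`, put `s = √(-κ T)` and `χ = χ(s, ·)`. The Wronskian-type quantity
`ψ(t) = χ(T - t) G'(t) + χ'(T - t) G(t)` satisfies `ψ' = -χ(T - t) G(t) (κ(t) + s²) ≤ 0`,
since `κ` is nonincreasing and `G ≥ 0`; hence `G(T) = ψ(T) ≤ ψ(0) = χ(T)`.
-/

open Set Filter Topology

lemma monotoneOn_Icc_of_hasDerivWithinAt {f f' : ℝ → ℝ} {a b : ℝ}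
    (hf : ∀ x ∈ Icc a b, HasDerivWithinAt f (f' x) (Icc a b) x)
    (hf' : ∀ x ∈ Ioo a b, 0 ≤ f' x) : MonotoneOn f (Icc a b) :=
  monotoneOn_of_hasDerivWithinAt_nonneg (convex_Icc a b)
    (fun x hx ↦ (hf x hx).continuousWithinAt)
    (by simpa only [interior_Icc] using
      fun x hx ↦ (hf x (Ioo_subset_Icc_self hx)).mono Ioo_subset_Icc_self)
    (by rwa [interior_Icc])

lemma antitoneOn_Icc_of_hasDerivWithinAt {f f' : ℝ → ℝ} {a b : ℝ}
    (hf : ∀ x ∈ Icc a b, HasDerivWithinAt f (f' x) (Icc a b) x)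
    (hf' : ∀ x ∈ Ioo a b, f' x ≤ 0) : AntitoneOn f (Icc a b) :=
  antitoneOn_of_hasDerivWithinAt_nonpos (convex_Icc a b)
    (fun x hx ↦ (hf x hx).continuousWithinAt)
    (by simpa only [interior_Icc] using
      fun x hx ↦ (hf x (Ioo_subset_Icc_self hx)).mono Ioo_subset_Icc_self)
    (by rwa [interior_Icc])

lemma HasDerivWithinAt.eventually_lt_of_pos {f : ℝ → ℝ} {f' x : ℝ}
    (hf : HasDerivWithinAt f f' (Ici x) x) (hf' : 0 < f') : ∀ᶠ y in 𝓝[>] x, f x < f y := by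
  have hslope := (hasDerivWithinAt_iff_tendsto_slope' self_notMem_Ioi).1 hf.Ioi_of_Ici
  filter_upwards [hslope.eventually (eventually_gt_nhds hf'), self_mem_nhdsWithin]
    with y hy hxy
  exact (slope_pos_iff_of_le hxy.le).1 hy

/-- The paper's `χ(s, t)`: the solution of `χ'' = s² χ`, `χ(0) = 0`, `χ'(0) = 1`. -/
noncomputable def chi (s t : ℝ) : ℝ := if s = 0 then t else Real.sinh (s * t) / s

lemma chi_zero_left (t : ℝ) : chi 0 t = t := if_pos rfl

lemma chi_of_ne_zero {s : ℝ} (hs : s ≠ 0) (t : ℝ) : chi s t = Real.sinh (s * t) / s :=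
  if_neg hs

lemma chi_zero_right (s : ℝ) : chi s 0 = 0 := by
  unfold chi; split_ifs <;> simp

lemma chi_nonneg (s : ℝ) {t : ℝ} (ht : 0 ≤ t) : 0 ≤ chi s t := by
  rcases lt_trichotomy s 0 with hs | rfl | hs
  · rw [chi_of_ne_zero hs.ne]
    exact div_nonneg_of_nonpos
      (Real.sinh_nonpos_iff.2 (mul_nonpos_of_nonpos_of_nonneg hs.le ht)) hs.le
  · rwa [chi_zero_left]
  · rw [chi_of_ne_zero hs.ne']
    exact div_nonneg (Real.sinh_nonneg_iff.2 (mul_nonneg hs.le ht)) hs.le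

lemma hasDerivAt_chi (s t : ℝ) : HasDerivAt (chi s) (Real.cosh (s * t)) t := by
  rcases eq_or_ne s 0 with rfl | hs
  · simpa [show chi 0 = id from funext chi_zero_left] using hasDerivAt_id t
  · have := (((hasDerivAt_id t).const_mul s).sinh).div_const s
    simp only [id, mul_one] at this
    rw [show chi s = fun t ↦ Real.sinh (s * t) / s from funext (chi_of_ne_zero hs)]
    exact this.congr_deriv (mul_div_cancel_right₀ _ hs)

lemma hasDerivAt_cosh_mul (s t : ℝ) :
    HasDerivAt (fun t ↦ Real.cosh (s * t)) (s ^ 2 * chi s t) t := by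
  have := ((hasDerivAt_id t).const_mul s).cosh
  simp only [id, mul_one] at this
  refine this.congr_deriv ?_
  rcases eq_or_ne s 0 with rfl | hs
  · simp
  · rw [chi_of_ne_zero hs]; field_simp

structure IsJacobiSolution (κ G G' : ℝ → ℝ) : Prop where
  hasDerivWithinAt : ∀ t ∈ Ici (0 : ℝ), HasDerivWithinAt G (G' t) (Ici 0) t
  hasDerivWithinAt_deriv : ∀ t ∈ Ici (0 : ℝ), HasDerivWithinAt G' (-κ t * G t) (Ici 0) t
  apply_zero : G 0 = 0
  deriv_zero : G' 0 = 1

namespace IsJacobiSolution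

variable {κ G G' : ℝ → ℝ}

lemma eventually_self_le_and_one_le_deriv (h : IsJacobiSolution κ G G')
    (hκ : ∀ t ∈ Ici (0 : ℝ), κ t ≤ 0) {x : ℝ} (hx : 0 ≤ x) (hGx : x ≤ G x)
    (hG'x : 1 ≤ G' x) :
    ∀ᶠ y in 𝓝[>] x, y ≤ G y ∧ 1 ≤ G' y := by
  have hGgt : ∀ᶠ y in 𝓝[>] x, G x < G y :=
    ((h.hasDerivWithinAt x hx).mono (Ici_subset_Ici.2 hx)).eventually_lt_of_pos (by linarith)
  obtain ⟨u, hxu, hu⟩ := mem_nhdsGT_iff_exists_Ioo_subset.1 hGgt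
  filter_upwards [Ioo_mem_nhdsGT hxu] with y hy
  have hsub : Icc x y ⊆ Ici 0 := fun t ht ↦ hx.trans ht.1
  have hxmem : x ∈ Icc x y := left_mem_Icc.2 hy.1.le
  have hG'mono : MonotoneOn G' (Icc x y) :=
    monotoneOn_Icc_of_hasDerivWithinAt
      (fun t ht ↦ (h.hasDerivWithinAt_deriv t (hsub ht)).mono hsub)
      (fun t ht ↦ mul_nonneg (neg_nonneg.2 (hκ t (hsub (Ioo_subset_Icc_self ht))))
        ((hx.trans hGx).trans (hu ⟨ht.1, ht.2.trans hy.2⟩).le))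
  have hG'ge : ∀ t ∈ Icc x y, 1 ≤ G' t := fun t ht ↦ hG'x.trans (hG'mono hxmem ht ht.1)
  have hmono : MonotoneOn (fun t ↦ G t - t) (Icc x y) :=
    monotoneOn_Icc_of_hasDerivWithinAt (f' := fun t ↦ G' t - 1)
      (fun t ht ↦ ((h.hasDerivWithinAt t (hsub ht)).mono hsub).sub (hasDerivWithinAt_id t _))
      (fun t ht ↦ sub_nonneg.2 (hG'ge t (Ioo_subset_Icc_self ht)))
  have := hmono hxmem (right_mem_Icc.2 hy.1.le) hy.1.le
  exact ⟨by linarith, hG'ge y (right_mem_Icc.2 hy.1.le)⟩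

lemma self_le (h : IsJacobiSolution κ G G') (hκ : ∀ t ∈ Ici (0 : ℝ), κ t ≤ 0) {T : ℝ}
    (hT : 0 ≤ T) : T ≤ G T := by
  have hGc : ContinuousOn G (Icc 0 T) := fun t ht ↦
    (h.hasDerivWithinAt t ht.1).continuousWithinAt.mono Icc_subset_Ici_self
  have hG'c : ContinuousOn G' (Icc 0 T) := fun t ht ↦
    (h.hasDerivWithinAt_deriv t ht.1).continuousWithinAt.mono Icc_subset_Ici_self
  have hclosed : IsClosed ({t | t ≤ G t ∧ 1 ≤ G' t} ∩ Icc 0 T) := by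
    convert (isClosed_Icc.isClosed_le continuousOn_id hGc).inter
      (isClosed_Icc.isClosed_le continuousOn_const hG'c) using 1
    ext t
    simp only [mem_inter_iff, mem_ofPred_eq, id]
    tauto
  have hsub := hclosed.Icc_subset_of_forall_mem_nhdsWithin ⟨h.apply_zero.ge, h.deriv_zero.ge⟩
    fun x hx ↦ h.eventually_self_le_and_one_le_deriv hκ hx.2.1 hx.1.1 hx.1.2
  exact (hsub ⟨hT, le_rfl⟩).1

lemma le_chi (h : IsJacobiSolution κ G G') {s T : ℝ} (hT : 0 ≤ T)
    (hκs : ∀ t ∈ Ioo 0 T, 0 ≤ G t * (κ t + s ^ 2)) : G T ≤ chi s T := by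
  set ψ : ℝ → ℝ := fun t ↦ chi s (T - t) * G' t + Real.cosh (s * (T - t)) * G t
  have hψ : AntitoneOn ψ (Icc 0 T) := by
    refine antitoneOn_Icc_of_hasDerivWithinAt
      (f' := fun t ↦ -(chi s (T - t) * (G t * (κ t + s ^ 2)))) (fun t ht ↦ ?_)
      fun t ht ↦ neg_nonpos.2 (mul_nonneg (chi_nonneg s (by linarith [ht.2])) (hκs t ht))
    have hrev := (hasDerivAt_id t).const_sub T
    have hchi := ((hasDerivAt_chi s (T - t)).comp t hrev).hasDerivWithinAt (s := Icc 0 T)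
    have hcosh := ((hasDerivAt_cosh_mul s (T - t)).comp t hrev).hasDerivWithinAt (s := Icc 0 T)
    have hG := (h.hasDerivWithinAt t ht.1).mono (Icc_subset_Ici_self : Icc 0 T ⊆ _)
    have hG' := (h.hasDerivWithinAt_deriv t ht.1).mono (Icc_subset_Ici_self : Icc 0 T ⊆ _)
    exact ((hchi.mul hG').add (hcosh.mul hG)).congr_deriv
      (by simp only [Function.comp_apply]; ring)
  have := hψ ⟨le_rfl, hT⟩ ⟨hT, le_rfl⟩ hT
  simpa [ψ, chi_zero_right, h.apply_zero, h.deriv_zero] using this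

end IsJacobiSolution

theorem jacobi_solution_two_sided_estimate_general
    (κ G : ℝ → ℝ)
    (hκnonpos : ∀ t ∈ Ici (0 : ℝ), κ t ≤ 0)
    (hκanti : AntitoneOn κ (Ici 0))
    (hG1 : ∀ t ∈ Ici (0 : ℝ), DifferentiableWithinAt ℝ G (Ici 0) t)
    (hG2 : ∀ t ∈ Ici (0 : ℝ), DifferentiableWithinAt ℝ (derivWithin G (Ici 0)) (Ici 0) t)
    (hODE : ∀ t ∈ Ici (0 : ℝ),
      derivWithin (derivWithin G (Ici 0)) (Ici 0) t + κ t * G t = 0)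
    (hG0 : G 0 = 0) (hG'0 : derivWithin G (Ici 0) 0 = 1) :
    ∀ t ∈ Ici (0 : ℝ),
      t ≤ G t ∧
      (κ t = 0 → G t ≤ t) ∧
      (κ t < 0 → G t ≤ Real.sinh (Real.sqrt (-κ t) * t) / Real.sqrt (-κ t)) := by
  have hG : IsJacobiSolution κ G (derivWithin G (Ici 0)) :=
    { hasDerivWithinAt := fun t ht ↦ (hG1 t ht).hasDerivWithinAt
      hasDerivWithinAt_deriv := fun t ht ↦
        (hG2 t ht).hasDerivWithinAt.congr_deriv (by linarith [hODE t ht])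
      apply_zero := hG0
      deriv_zero := hG'0 }
  intro T hT
  have hsq : √(-κ T) ^ 2 = -κ T := Real.sq_sqrt (neg_nonneg.2 (hκnonpos T hT))
  have hup : G T ≤ chi √(-κ T) T := hG.le_chi hT fun t ht ↦
    mul_nonneg (ht.1.le.trans (hG.self_le hκnonpos ht.1.le))
      (by linarith [hκanti ht.1.le hT ht.2.le])
  refine ⟨hG.self_le hκnonpos hT, fun hκT ↦ ?_, fun hκT ↦ ?_⟩
  · simpa [hκT, chi_zero_left] using hup
  · rwa [chi_of_ne_zero (Real.sqrt_pos.2 (neg_pos.2 hκT)).ne'] at hup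

/-- **Lemma 5.2 (two-sided estimate of the Jacobi equation solution)**: if `κ` is
continuous, nonpositive and nonincreasing on `[0, ∞)` and `G` solves the Jacobi equation
`G″ + κ·G = 0` on `[0, ∞)` with `G(0) = 0`, `G′(0) = 1` (derivatives taken within
`[0, ∞)`), then `χ(0,t) = t ≤ G(t) ≤ χ(√(−κ(t)), t)` for all `t ≥ 0`, where
`χ(0,t) = t` and `χ(s,t) = sinh(st)/s` for `s ≠ 0`. -/
theorem jacobi_solution_two_sided_estimate
    (κ G : ℝ → ℝ)
    (hκcont : ContinuousOn κ (Ici 0))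
    (hκnonpos : ∀ t ∈ Ici (0 : ℝ), κ t ≤ 0)
    (hκanti : AntitoneOn κ (Ici 0))
    (hG1 : ∀ t ∈ Ici (0 : ℝ), DifferentiableWithinAt ℝ G (Ici 0) t)
    (hG2 : ∀ t ∈ Ici (0 : ℝ), DifferentiableWithinAt ℝ (derivWithin G (Ici 0)) (Ici 0) t)
    (hODE : ∀ t ∈ Ici (0 : ℝ),
      derivWithin (derivWithin G (Ici 0)) (Ici 0) t + κ t * G t = 0)
    (hG0 : G 0 = 0) (hG'0 : derivWithin G (Ici 0) 0 = 1) :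
    ∀ t ∈ Ici (0 : ℝ),
      t ≤ G t ∧
      (κ t = 0 → G t ≤ t) ∧
      (κ t < 0 → G t ≤ Real.sinh (Real.sqrt (-κ t) * t) / Real.sqrt (-κ t)) :=
  jacobi_solution_two_sided_estimate_general κ G hκnonpos hκanti hG1 hG2 hODE hG0 hG'0
end
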